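/- arXiv:2402.08315 — 2 statements merged into one kernel-verified Lean document; each statement's English description precedes it below -/
import Mathlib

section
/- The set of linear functionals ξ : V → ℝ satisfying ξ(X v) = 0 and ξ(Y v) = 0 for all v ∈ V is exactly the linear span of p* and q*; in particular this space of invariant 1-forms is 2-dimensional. -/
/-- The model tangent space: a 10-dimensional real vector space with standard basis
`e₀, e₁, e₂, e₃, f₀, f₁, f₂, f₃, p, q` corresponding to the coordinates `0, …, 9`. -/
abbrev V10 : Type := Fin 10 → ℝ

/-- The action of `ad_{E_{α₁}}` on the tangent space `m` of the adjoint orbit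
`G₂/GL₂(ℝ)`:  `X e₀ = e₁`, `X e₁ = 2e₂`, `X e₂ = 3e₃`, `X e₃ = 0`, `X f₀ = 0`,
`X f₁ = -3f₀`, `X f₂ = -2f₁`, `X f₃ = -f₂`, `X p = X q = 0`. -/
noncomputable def Xop : V10 →ₗ[ℝ] V10 :=
  Matrix.toLin' (Matrix.of fun i j : Fin 10 =>
    if i = 1 ∧ j = 0 then (1 : ℝ) else
    if i = 2 ∧ j = 1 then 2 else
    if i = 3 ∧ j = 2 then 3 else
    if i = 4 ∧ j = 5 then -3 else
    if i = 5 ∧ j = 6 then -2 else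
    if i = 6 ∧ j = 7 then -1 else 0)

/-- The action of `ad_{E_{-α₁}}`:  `Y e₀ = 0`, `Y e₁ = 3e₀`, `Y e₂ = 2e₁`, `Y e₃ = e₂`,
`Y f₀ = -f₁`, `Y f₁ = -2f₂`, `Y f₂ = -3f₃`, `Y f₃ = 0`, `Y p = Y q = 0`. -/
noncomputable def Yop : V10 →ₗ[ℝ] V10 :=
  Matrix.toLin' (Matrix.of fun i j : Fin 10 =>
    if i = 0 ∧ j = 1 then (3 : ℝ) else
    if i = 1 ∧ j = 2 then 2 else
    if i = 2 ∧ j = 3 then 1 else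
    if i = 5 ∧ j = 4 then -1 else
    if i = 6 ∧ j = 5 then -2 else
    if i = 7 ∧ j = 6 then -3 else 0)

/-- The dual basis covectors `e₀*, …, e₃*, f₀*, …, f₃*, p*, q*` (coordinate projections):
`dual 0, …, dual 3` are `e₀*, …, e₃*`; `dual 4, …, dual 7` are `f₀*, …, f₃*`;
`dual 8 = p*` and `dual 9 = q*`. -/
noncomputable def dual (i : Fin 10) : V10 →ₗ[ℝ] ℝ := LinearMap.proj i

/-- The wedge product `ξ₁ ∧ ⋯ ∧ ξ_k` of covectors, as the alternating `k`-form
`(v₁, …, v_k) ↦ det (ξ i (v j))`. -/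
noncomputable def wdg {k : ℕ} (ξ : Fin k → (V10 →ₗ[ℝ] ℝ)) : AlternatingMap ℝ V10 ℝ (Fin k) :=
  (Matrix.detRowAlternating).compLinearMap (LinearMap.pi ξ)

/-- The Lie derivative of the alternating `k`-form `ω` along the endomorphism `A`
vanishes: `Σ_{i} ω (v₁, …, A vᵢ, …, v_k) = 0` for all `v₁, …, v_k`. -/
def LieDerivZero {k : ℕ} (A : V10 →ₗ[ℝ] V10) (ω : AlternatingMap ℝ V10 ℝ (Fin k)) : Prop :=
  ∀ v : Fin k → V10, ∑ i, ω (Function.update v i (A (v i))) = 0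

/-- An alternating `k`-form on `V10` is invariant if its Lie derivative along both `X`
and `Y` vanishes. -/
def IsInv {k : ℕ} (ω : AlternatingMap ℝ V10 ℝ (Fin k)) : Prop :=
  LieDerivZero Xop ω ∧ LieDerivZero Yop ω

section aux

private lemma hX0 : Xop (Pi.single (0 : Fin 10) (1:ℝ)) = Pi.single 1 1 := by
  funext i; fin_cases i <;>
    simp [Xop, Matrix.toLin'_apply, Matrix.mulVec, dotProduct, Fin.sum_univ_succ,
      Pi.single_apply]

private lemma hX1 : Xop (Pi.single (1 : Fin 10) (1:ℝ)) =
    (2:ℝ) • (Pi.single 2 1 : V10) := by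
  funext i; fin_cases i <;>
    simp [Xop, Matrix.toLin'_apply, Matrix.mulVec, dotProduct, Fin.sum_univ_succ,
      Pi.single_apply]

private lemma hX2 : Xop (Pi.single (2 : Fin 10) (1:ℝ)) =
    (3:ℝ) • (Pi.single 3 1 : V10) := by
  funext i; fin_cases i <;>
    simp [Xop, Matrix.toLin'_apply, Matrix.mulVec, dotProduct, Fin.sum_univ_succ,
      Pi.single_apply]

private lemma hX5 : Xop (Pi.single (5 : Fin 10) (1:ℝ)) =
    (-3:ℝ) • (Pi.single 4 1 : V10) := by
  funext i; fin_cases i <;>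
    simp [Xop, Matrix.toLin'_apply, Matrix.mulVec, dotProduct, Fin.sum_univ_succ,
      Pi.single_apply]

private lemma hX6 : Xop (Pi.single (6 : Fin 10) (1:ℝ)) =
    (-2:ℝ) • (Pi.single 5 1 : V10) := by
  funext i; fin_cases i <;>
    simp [Xop, Matrix.toLin'_apply, Matrix.mulVec, dotProduct, Fin.sum_univ_succ,
      Pi.single_apply]

private lemma hX7 : Xop (Pi.single (7 : Fin 10) (1:ℝ)) =
    (-1:ℝ) • (Pi.single 6 1 : V10) := by
  funext i; fin_cases i <;>
    simp [Xop, Matrix.toLin'_apply, Matrix.mulVec, dotProduct, Fin.sum_univ_succ,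
      Pi.single_apply]

private lemma hY1 : Yop (Pi.single (1 : Fin 10) (1:ℝ)) =
    (3:ℝ) • (Pi.single 0 1 : V10) := by
  funext i; fin_cases i <;>
    simp [Yop, Matrix.toLin'_apply, Matrix.mulVec, dotProduct, Fin.sum_univ_succ,
      Pi.single_apply]

private lemma hY6 : Yop (Pi.single (6 : Fin 10) (1:ℝ)) =
    (-3:ℝ) • (Pi.single 7 1 : V10) := by
  funext i; fin_cases i <;>
    simp [Yop, Matrix.toLin'_apply, Matrix.mulVec, dotProduct, Fin.sum_univ_succ,
      Pi.single_apply]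

private lemma hX8 (v : V10) : Xop v 8 = 0 := by
  simp [Xop, Matrix.toLin'_apply, Matrix.mulVec, dotProduct, Fin.sum_univ_succ]

private lemma hX9 (v : V10) : Xop v 9 = 0 := by
  simp [Xop, Matrix.toLin'_apply, Matrix.mulVec, dotProduct, Fin.sum_univ_succ]

private lemma hY8 (v : V10) : Yop v 8 = 0 := by
  simp [Yop, Matrix.toLin'_apply, Matrix.mulVec, dotProduct, Fin.sum_univ_succ]

private lemma hY9 (v : V10) : Yop v 9 = 0 := by
  simp [Yop, Matrix.toLin'_apply, Matrix.mulVec, dotProduct, Fin.sum_univ_succ]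

end aux

/-- **Proposition 4.1.** The space of invariant 1-forms, i.e. linear
functionals `ξ : V → ℝ` with `ξ ∘ X = 0` and `ξ ∘ Y = 0`, is exactly the linear span of
`p*` and `q*`; in particular it is 2-dimensional. -/
theorem stmt9 :
    {ξ : V10 →ₗ[ℝ] ℝ | (∀ v : V10, ξ (Xop v) = 0) ∧ (∀ v : V10, ξ (Yop v) = 0)} =
      ((Submodule.span ℝ ({dual 8, dual 9} : Set (V10 →ₗ[ℝ] ℝ)) :
          Submodule ℝ (V10 →ₗ[ℝ] ℝ)) : Set (V10 →ₗ[ℝ] ℝ)) ∧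
    Module.finrank ℝ (Submodule.span ℝ ({dual 8, dual 9} : Set (V10 →ₗ[ℝ] ℝ))) = 2 := by
  constructor
  · ext ξ
    simp only [Set.mem_setOf_eq, SetLike.mem_coe]
    constructor
    · rintro ⟨h1, h2⟩
      rw [Submodule.mem_span_pair]
      refine ⟨ξ (Pi.single 8 1), ξ (Pi.single 9 1), ?_⟩
      -- values of ξ on the first eight basis vectors vanish
      have c1 : ξ (Pi.single 1 1) = 0 := by have := h1 (Pi.single 0 1); rwa [hX0] at this
      have c2 : ξ (Pi.single 2 1) = 0 := by
        have := h1 (Pi.single 1 1); rw [hX1, map_smul] at this; simpa using this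
      have c3 : ξ (Pi.single 3 1) = 0 := by
        have := h1 (Pi.single 2 1); rw [hX2, map_smul] at this; simpa using this
      have c4 : ξ (Pi.single 4 1) = 0 := by
        have := h1 (Pi.single 5 1); rw [hX5, map_smul] at this; simpa using this
      have c5 : ξ (Pi.single 5 1) = 0 := by
        have := h1 (Pi.single 6 1); rw [hX6, map_smul] at this; simpa using this
      have c6 : ξ (Pi.single 6 1) = 0 := by
        have := h1 (Pi.single 7 1); rw [hX7, map_smul] at this; simpa using this
      have c0 : ξ (Pi.single 0 1) = 0 := by
        have := h2 (Pi.single 1 1); rw [hY1, map_smul] at this; simpa using this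
      have c7 : ξ (Pi.single 7 1) = 0 := by
        have := h2 (Pi.single 6 1); rw [hY6, map_smul] at this; simpa using this
      refine (Pi.basisFun ℝ (Fin 10)).ext fun i => ?_
      fin_cases i <;>
        simp [dual, Pi.basisFun_apply, Pi.single_apply, c0, c1, c2, c3, c4, c5, c6, c7]
    · intro hξ
      obtain ⟨a, b, hab⟩ := Submodule.mem_span_pair.mp hξ
      subst hab
      constructor <;> intro v <;>
        simp [dual, hX8 v, hX9 v, hY8 v, hY9 v]
  · have hli : LinearIndependent ℝ ![dual 8, dual 9] := by
      rw [LinearIndependent.pair_iff]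
      intro s t hst
      constructor
      · have := DFunLike.congr_fun hst (Pi.single 8 1)
        simpa [dual, Pi.single_apply] using this
      · have := DFunLike.congr_fun hst (Pi.single 9 1)
        simpa [dual, Pi.single_apply] using this
    have hset : ({dual 8, dual 9} : Set (V10 →ₗ[ℝ] ℝ)) = Set.range ![dual 8, dual 9] := by
      ext x
      simp [Fin.exists_fin_two]; tauto
    rw [hset, finrank_span_eq_card hli]
    simp
end

section
/- The three alternating 4-forms ω⁴₊, ω⁴₋ and ω⁴ on V are invariant, and they are linearly independent. -/
/-- `ω⁴₊ := e₀* ∧ e₁* ∧ e₂* ∧ e₃*`. -/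
noncomputable def w4p : AlternatingMap ℝ V10 ℝ (Fin 4) :=
  wdg ![dual 0, dual 1, dual 2, dual 3]

/-- `ω⁴₋ := f₀* ∧ f₁* ∧ f₂* ∧ f₃*`. -/
noncomputable def w4m : AlternatingMap ℝ V10 ℝ (Fin 4) :=
  wdg ![dual 4, dual 5, dual 6, dual 7]

/-- `ω⁴ := e₀*∧e₁*∧f₀*∧f₁* + e₀*∧e₂*∧f₀*∧f₂* + e₀*∧e₃*∧f₁*∧f₂* + e₁*∧e₂*∧f₀*∧f₃*
  + e₁*∧e₃*∧f₁*∧f₃* + e₂*∧e₃*∧f₂*∧f₃*`. -/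
noncomputable def w4 : AlternatingMap ℝ V10 ℝ (Fin 4) :=
  wdg ![dual 0, dual 1, dual 4, dual 5] + wdg ![dual 0, dual 2, dual 4, dual 6] +
    wdg ![dual 0, dual 3, dual 5, dual 6] + wdg ![dual 1, dual 2, dual 4, dual 7] +
    wdg ![dual 1, dual 3, dual 5, dual 7] + wdg ![dual 2, dual 3, dual 6, dual 7]

/-!
For covectors `ξ₁, …, ξ_k` and an endomorphism `A`, the Lie derivative of `ξ₁ ∧ ⋯ ∧ ξ_k` along `A`
obeys the Leibniz rule `Σⱼ ξ₁ ∧ ⋯ ∧ (ξⱼ ∘ A) ∧ ⋯ ∧ ξ_k`: at the level of matrices both sides are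
the derivative of `det (M + t B)` at `t = 0`, i.e. `tr (adj M * B)`. The transposes of `X` and `Y`
move each `eᵢ*` and each `fᵢ*` one step along its chain, so for `ω⁴₊` and `ω⁴₋` every Leibniz term
repeats a covector, while for `ω⁴` the surviving terms cancel in pairs. Evaluating the three forms
on `(e₀, e₁, e₂, e₃)`, `(f₀, f₁, f₂, f₃)` and `(e₀, e₁, f₀, f₁)` gives the identity matrix, which
yields linear independence.
-/

open Function Matrix

theorem Matrix.sum_det_updateRow_eq_sum_det_updateCol {ι R : Type*} [Fintype ι] [DecidableEq ι]
    [CommRing R] (A B : Matrix ι ι R) :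
    ∑ i, (A.updateRow i (B i)).det = ∑ j, (A.updateCol j fun i ↦ B i j).det := by
  have hcol : ∀ j c, (A.updateCol j c).det = ∑ i, A.adjugate j i * c i := fun j c ↦ by
    rw [← cramer_apply, cramer_eq_adjugate_mulVec]; rfl
  have hrow : ∀ i r, (A.updateRow i r).det = ∑ j, A.adjugate j i * r j := fun i r ↦ by
    rw [← det_transpose, ← updateCol_transpose, ← cramer_apply, cramer_eq_adjugate_mulVec,
      ← adjugate_transpose]; rfl
  simp only [hrow, hcol]
  exact Finset.sum_comm

theorem sum_detRowAlternating_compLinearMap_pi_update {R M ι : Type*} [CommRing R]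
    [AddCommGroup M] [Module R M] [Fintype ι] [DecidableEq ι] (ξ : ι → M →ₗ[R] R)
    (A : M →ₗ[R] M) (v : ι → M) :
    ∑ i, detRowAlternating.compLinearMap (LinearMap.pi ξ) (update v i (A (v i))) =
      ∑ j, detRowAlternating.compLinearMap (LinearMap.pi (update ξ j (ξ j ∘ₗ A))) v := by
  convert sum_det_updateRow_eq_sum_det_updateCol (of fun i j ↦ ξ j (v i))
    (of fun i j ↦ ξ j (A (v i))) using 3 with i _ j _
  · show det _ = det _
    congr 1; ext k l; by_cases h : k = i <;> simp [h, updateRow_apply]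
  · show det _ = det _
    congr 1; ext k l; by_cases h : l = j <;> simp [h]

section Wedge

variable {k : ℕ}

theorem sum_wdg_update_apply (ξ : Fin k → V10 →ₗ[ℝ] ℝ) (A : V10 →ₗ[ℝ] V10) (v : Fin k → V10) :
    ∑ i, wdg ξ (update v i (A (v i))) = ∑ j, wdg (update ξ j (ξ j ∘ₗ A)) v :=
  sum_detRowAlternating_compLinearMap_pi_update ξ A v

theorem wdg_update_apply (ξ : Fin k → V10 →ₗ[ℝ] ℝ) (j : Fin k) (η : V10 →ₗ[ℝ] ℝ)
    (v : Fin k → V10) :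
    wdg (update ξ j η) v = ((of fun i j ↦ ξ j (v i)).updateCol j fun i ↦ η (v i)).det := by
  show det _ = det _
  congr 1; ext i l; by_cases h : l = j <;> simp [h]

theorem wdg_update_smul (ξ : Fin k → V10 →ₗ[ℝ] ℝ) (j : Fin k) (c : ℝ) (η : V10 →ₗ[ℝ] ℝ) :
    wdg (update ξ j (c • η)) = c • wdg (update ξ j η) := by
  ext v
  simp only [wdg_update_apply, AlternatingMap.smul_apply, LinearMap.smul_apply, smul_eq_mul]
  exact det_updateCol_smul _ j c _

theorem wdg_update_zero (ξ : Fin k → V10 →ₗ[ℝ] ℝ) (j : Fin k) : wdg (update ξ j 0) = 0 := by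
  simpa using wdg_update_smul ξ j 0 0

theorem wdg_dual_comp_eq_zero {I : Fin k → Fin 10} (hI : ¬ Injective I) : wdg (dual ∘ I) = 0 := by
  obtain ⟨i, j, hij, hne⟩ : ∃ i j, I i = I j ∧ i ≠ j := by simpa [Injective] using hI
  ext v
  exact det_zero_of_column_eq hne fun l ↦ by simp [hij]

theorem wdg_dual_comp_apply_basisFun_self {I : Fin k → Fin 10} (hI : Injective I) :
    wdg (dual ∘ I) (Pi.basisFun ℝ (Fin 10) ∘ I) = 1 := by
  show det _ = 1
  rw [← det_one (n := Fin k) (R := ℝ)]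
  congr 1
  ext i j
  simp [dual, one_apply, Pi.single_apply, hI.eq_iff, eq_comm]

theorem wdg_dual_comp_apply_basisFun_eq_zero {I J : Fin k → Fin 10}
    (h : ∃ i, ∀ j, I j ≠ J i) : wdg (dual ∘ I) (Pi.basisFun ℝ (Fin 10) ∘ J) = 0 := by
  obtain ⟨i, hi⟩ := h
  exact det_eq_zero_of_row_eq_zero i fun j ↦ by simp [dual, hi j]

end Wedge

theorem dual_comp_Xop (i : Fin 10) :
    dual i ∘ₗ Xop = ![0, dual 0, (2 : ℝ) • dual 1, (3 : ℝ) • dual 2, (-3 : ℝ) • dual 5,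
      (-2 : ℝ) • dual 6, (-1 : ℝ) • dual 7, 0, 0, 0] i := by
  fin_cases i <;> ext x <;> simp [dual, Xop, toLin'_apply, mulVec, dotProduct]

theorem dual_comp_Yop (i : Fin 10) :
    dual i ∘ₗ Yop = ![(3 : ℝ) • dual 1, (2 : ℝ) • dual 2, dual 3, 0, 0, (-1 : ℝ) • dual 4,
      (-2 : ℝ) • dual 5, (-3 : ℝ) • dual 6, 0, 0] i := by
  fin_cases i <;> ext x <;> simp [dual, Yop, toLin'_apply, mulVec, dotProduct]

section VecFour

variable {α β : Type*}

theorem comp_vecFour (f : α → β) (a b c d : α) : f ∘ ![a, b, c, d] = ![f a, f b, f c, f d] := by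
  ext i; fin_cases i <;> rfl

theorem update_vecFour_zero (a b c d x : α) : update ![a, b, c, d] 0 x = ![x, b, c, d] := by
  ext i; fin_cases i <;> rfl

theorem update_vecFour_one (a b c d x : α) : update ![a, b, c, d] 1 x = ![a, x, c, d] := by
  ext i; fin_cases i <;> rfl

theorem update_vecFour_two (a b c d x : α) : update ![a, b, c, d] 2 x = ![a, b, x, d] := by
  ext i; fin_cases i <;> rfl

theorem update_vecFour_three (a b c d x : α) : update ![a, b, c, d] 3 x = ![a, b, c, x] := by
  ext i; fin_cases i <;> rfl

end VecFour

theorem isInv_w4p_w4m_w4 : IsInv w4p ∧ IsInv w4m ∧ IsInv w4 := by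
  refine ⟨⟨?_, ?_⟩, ⟨?_, ?_⟩, ⟨?_, ?_⟩⟩ <;> intro v <;>
  simp only [w4p, w4m, w4, ← comp_vecFour, AlternatingMap.add_apply, Finset.sum_add_distrib,
    sum_wdg_update_apply, Fin.sum_univ_four, Function.comp_apply, cons_val, dual_comp_Xop,
    dual_comp_Yop, wdg_update_smul, wdg_update_zero, ← comp_update, update_vecFour_zero,
    update_vecFour_one, update_vecFour_two, update_vecFour_three, AlternatingMap.smul_apply,
    AlternatingMap.zero_apply, smul_eq_mul] <;>
  -- a Leibniz term with a repeated covector is indexed by a non-injective tuple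
  simp (disch := decide) only [wdg_dual_comp_eq_zero, AlternatingMap.zero_apply] <;>
  ring

theorem AlternatingMap.linearIndependent_of_apply_eq_ite {R M ι κ : Type*} [CommRing R]
    [AddCommGroup M] [Module R M] [Fintype κ] [DecidableEq κ] (ω : κ → M [⋀^ι]→ₗ[R] R)
    (x : κ → ι → M) (h : ∀ i j, ω i (x j) = if i = j then 1 else 0) : LinearIndependent R ω := by
  rw [Fintype.linearIndependent_iff]
  intro g hg j
  have hgj := congr($hg (x j))
  rw [← coe_multilinearMap, ← toMultilinearMapLM_apply (S := R), map_sum] at hgj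
  simpa [h] using hgj

theorem linearIndependent_w4p_w4m_w4 : LinearIndependent ℝ ![w4p, w4m, w4] := by
  refine AlternatingMap.linearIndependent_of_apply_eq_ite _
    ![Pi.basisFun ℝ (Fin 10) ∘ ![0, 1, 2, 3], Pi.basisFun ℝ (Fin 10) ∘ ![4, 5, 6, 7],
      Pi.basisFun ℝ (Fin 10) ∘ ![0, 1, 4, 5]] fun i j ↦ ?_
  fin_cases i <;> fin_cases j <;>
  simp (disch := decide) [w4p, w4m, w4, ← comp_vecFour, wdg_dual_comp_apply_basisFun_self,
    wdg_dual_comp_apply_basisFun_eq_zero]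

/-- **Proposition 4.3.** The three alternating 4-forms `ω⁴₊`, `ω⁴₋` and
`ω⁴` are invariant and linearly independent. -/
theorem stmt11 :
    IsInv w4p ∧ IsInv w4m ∧ IsInv w4 ∧
    LinearIndependent ℝ ![w4p, w4m, w4] := by
  obtain ⟨hp, hm, h⟩ := isInv_w4p_w4m_w4
  exact ⟨hp, hm, h, linearIndependent_w4p_w4m_w4⟩
end
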